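/- In a regular category C, let α : f_A → f_B and β : f_B → f_C be double extensions. If the composite square β ∘ α : f_A → f_C is a pullback square, then both α and β are pullback squares. -/

import Mathlib

open CategoryTheory CategoryTheory.Limits

universe v u

namespace Paper

variable {C : Type u} [Category.{v} C]

/-- `f` is a regular epimorphism. -/
def IsRegEpi {X Y : C} (f : X ⟶ Y) : Prop := Nonempty (RegularEpi f)

/-- A regular category: a finitely complete category with coequalizers of kernel pairs in
which regular epimorphisms are stable under pullback. -/
class RegularCat (C : Type u) [Category.{v} C] [HasFiniteLimits C] : Prop where
  hasCoeqOfKernelPairs : ∀ {X Y : C} (f : X ⟶ Y),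
    HasCoequalizer (pullback.fst f f) (pullback.snd f f)
  regEpiPullbackStable : ∀ {X Y Z : C} (f : X ⟶ Y) (g : Z ⟶ Y),
    IsRegEpi f → IsRegEpi (pullback.snd f g)

/-- An internal equivalence relation given by a parallel pair `r₁ r₂ : R ⟶ X`. -/
structure IsEquivRel [HasFiniteLimits C] {R X : C} (r₁ r₂ : R ⟶ X) : Prop where
  jointlyMono : Mono (prod.lift r₁ r₂)
  refl : ∃ d : X ⟶ R, d ≫ r₁ = 𝟙 X ∧ d ≫ r₂ = 𝟙 X
  symm : ∃ s : R ⟶ R, s ≫ r₁ = r₂ ∧ s ≫ r₂ = r₁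
  trans : ∃ t : pullback r₂ r₁ ⟶ R,
    t ≫ r₁ = pullback.fst r₂ r₁ ≫ r₁ ∧ t ≫ r₂ = pullback.snd r₂ r₁ ≫ r₂

/-- A Barr exact category: a regular category in which every internal equivalence relation
is effective (i.e. is a kernel pair). -/
class BarrExact (C : Type u) [Category.{v} C] [HasFiniteLimits C] extends RegularCat C : Prop where
  equivRelEffective : ∀ {R X : C} (r₁ r₂ : R ⟶ X), IsEquivRel r₁ r₂ →
    ∃ (Y : C) (f : X ⟶ Y), IsKernelPair f r₁ r₂

section DoubleExt
variable [HasFiniteLimits C]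

/-- A double extension: a commutative square `αt ≫ fB = fA ≫ αb` of regular epimorphisms
whose comparison morphism to the pullback is also a regular epimorphism. -/
structure IsDoubleExt {A₁ A₀ B₁ B₀ : C} (fA : A₁ ⟶ A₀) (fB : B₁ ⟶ B₀)
    (αt : A₁ ⟶ B₁) (αb : A₀ ⟶ B₀) : Prop where
  w : αt ≫ fB = fA ≫ αb
  left : IsRegEpi fA
  right : IsRegEpi fB
  top : IsRegEpi αt
  bot : IsRegEpi αb
  comparison : IsRegEpi (pullback.lift fA αt w.symm : A₁ ⟶ pullback αb fB)

end DoubleExt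

/-- The category `Ext C` of extensions: the full subcategory of the arrow category of `C`
determined by the regular epimorphisms. -/
abbrev ExtCat (C : Type u) [Category.{v} C] : Type max u v :=
  ObjectProperty.FullSubcategory (fun f : Arrow C => IsRegEpi f.hom)

/-- An object of `Ext C` from a regular epimorphism. -/
def ExtCat.mk' {X Y : C} (f : X ⟶ Y) (hf : IsRegEpi f) : ExtCat C :=
  ⟨Arrow.mk f, hf⟩

/-- The top (domain) component of a morphism of `Ext C`. -/
def ExtCat.homLeft {f g : ExtCat C} (φ : f ⟶ g) : f.obj.left ⟶ g.obj.left :=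
  CommaMorphism.left φ.hom

/-- The bottom (codomain) component of a morphism of `Ext C`. -/
def ExtCat.homRight {f g : ExtCat C} (φ : f ⟶ g) : f.obj.right ⟶ g.obj.right :=
  CommaMorphism.right φ.hom

lemma ExtCat.homLeft_comp {f g h : ExtCat C} (a : f ⟶ g) (b : g ⟶ h) :
    ExtCat.homLeft (a ≫ b) = ExtCat.homLeft a ≫ ExtCat.homLeft b := rfl

lemma ExtCat.homRight_comp {f g h : ExtCat C} (a : f ⟶ g) (b : g ⟶ h) :
    ExtCat.homRight (a ≫ b) = ExtCat.homRight a ≫ ExtCat.homRight b := rfl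

lemma ExtCat.hom_w {f g : ExtCat C} (φ : f ⟶ g) :
    ExtCat.homLeft φ ≫ g.obj.hom = f.obj.hom ≫ ExtCat.homRight φ :=
  CommaMorphism.w φ.hom

/-- A morphism of `Ext C` from a commutative square in `C`. -/
def ExtCat.homMk' {X₁ X₀ Y₁ Y₀ : C} {f : X₁ ⟶ X₀} {g : Y₁ ⟶ Y₀}
    {hf : IsRegEpi f} {hg : IsRegEpi g}
    (u : X₁ ⟶ Y₁) (v : X₀ ⟶ Y₀) (w : u ≫ g = f ≫ v) :
    ExtCat.mk' f hf ⟶ ExtCat.mk' g hg :=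
  ObjectProperty.homMk (Arrow.homMk (u := u) (v := v) w)

/-- A (commutative) square in `C`, with left vertical `left : A₁ ⟶ A₀`, right vertical
`right : B₁ ⟶ B₀`, top horizontal `top : A₁ ⟶ B₁` and bottom horizontal `bot : A₀ ⟶ B₀`. -/
structure Sq (C : Type u) [Category.{v} C] where
  A₁ : C
  A₀ : C
  B₁ : C
  B₀ : C
  left : A₁ ⟶ A₀
  right : B₁ ⟶ B₀
  top : A₁ ⟶ B₁
  bot : A₀ ⟶ B₀
  w : top ≫ right = left ≫ bot

/-- The square is a double extension. -/
def Sq.IsDE [HasFiniteLimits C] (s : Sq C) : Prop :=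
  IsDoubleExt s.left s.right s.top s.bot

/-- A commutative cube, presented as a morphism of squares `Φ : s ⟶ t`. -/
structure SqHom (s t : Sq C) where
  h₁₁ : s.A₁ ⟶ t.A₁
  h₁₀ : s.A₀ ⟶ t.A₀
  h₀₁ : s.B₁ ⟶ t.B₁
  h₀₀ : s.B₀ ⟶ t.B₀
  wA : h₁₁ ≫ t.left = s.left ≫ h₁₀
  wB : h₀₁ ≫ t.right = s.right ≫ h₀₀
  wt : h₁₁ ≫ t.top = s.top ≫ h₀₁
  wb : h₁₀ ≫ t.bot = s.bot ≫ h₀₀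

/-- Composition of cubes (as morphisms of squares). -/
def SqHom.comp {s t u : Sq C} (Φ : SqHom s t) (Ψ : SqHom t u) : SqHom s u where
  h₁₁ := Φ.h₁₁ ≫ Ψ.h₁₁
  h₁₀ := Φ.h₁₀ ≫ Ψ.h₁₀
  h₀₁ := Φ.h₀₁ ≫ Ψ.h₀₁
  h₀₀ := Φ.h₀₀ ≫ Ψ.h₀₀
  wA := by rw [Category.assoc, Ψ.wA, ← Category.assoc, Φ.wA, Category.assoc]
  wB := by rw [Category.assoc, Ψ.wB, ← Category.assoc, Φ.wB, Category.assoc]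
  wt := by rw [Category.assoc, Ψ.wt, ← Category.assoc, Φ.wt, Category.assoc]
  wb := by rw [Category.assoc, Ψ.wb, ← Category.assoc, Φ.wb, Category.assoc]

section Cube
variable [HasFiniteLimits C]

/-- Seen as a morphism `(σ, β) : s ⟶ t` between the double extensions `s` (as the arrow
`s.left → s.right`) and `t`, the face `σ` of the cube: the square from `s.left` to `t.left`. -/
def SqHom.sigmaSq {s t : Sq C} (Φ : SqHom s t) : Sq C where
  A₁ := s.A₁
  A₀ := s.A₀
  B₁ := t.A₁
  B₀ := t.A₀
  left := s.left
  right := t.left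
  top := Φ.h₁₁
  bot := Φ.h₁₀
  w := Φ.wA

/-- The face `β` of the cube: the square from `s.right` to `t.right`. -/
def SqHom.betaSq {s t : Sq C} (Φ : SqHom s t) : Sq C where
  A₁ := s.B₁
  A₀ := s.B₀
  B₁ := t.B₁
  B₀ := t.B₀
  left := s.right
  right := t.right
  top := Φ.h₀₁
  bot := Φ.h₀₀
  w := Φ.wB

/-- Top component of the componentwise pullback of `t` (i.e. `α`) and `betaSq Φ` (i.e. `β`). -/
noncomputable def SqHom.P₁ {s t : Sq C} (Φ : SqHom s t) : C := pullback t.top Φ.h₀₁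

/-- Bottom component of the componentwise pullback of `α` and `β`. -/
noncomputable def SqHom.P₀ {s t : Sq C} (Φ : SqHom s t) : C := pullback t.bot Φ.h₀₀

/-- The induced arrow between the components of the componentwise pullback of `α` and `β`. -/
noncomputable def SqHom.fP {s t : Sq C} (Φ : SqHom s t) : Φ.P₁ ⟶ Φ.P₀ :=
  pullback.map t.top Φ.h₀₁ t.bot Φ.h₀₀ t.left s.right t.right t.w Φ.wB

/-- The top comparison morphism. -/
noncomputable def SqHom.c₁ {s t : Sq C} (Φ : SqHom s t) : s.A₁ ⟶ Φ.P₁ :=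
  pullback.lift Φ.h₁₁ s.top Φ.wt

/-- The bottom comparison morphism. -/
noncomputable def SqHom.c₀ {s t : Sq C} (Φ : SqHom s t) : s.A₀ ⟶ Φ.P₀ :=
  pullback.lift Φ.h₁₀ s.bot Φ.wb

lemma SqHom.comp_w {s t : Sq C} (Φ : SqHom s t) : Φ.c₁ ≫ Φ.fP = s.left ≫ Φ.c₀ := by
  apply pullback.hom_ext
  · unfold SqHom.c₁ SqHom.c₀ SqHom.fP SqHom.P₀ SqHom.P₁
    erw [Category.assoc, pullback.lift_fst, Category.assoc, pullback.lift_fst, pullback.lift_fst_assoc, Φ.wA]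
  · unfold SqHom.c₁ SqHom.c₀ SqHom.fP SqHom.P₀ SqHom.P₁
    erw [Category.assoc, pullback.lift_snd, Category.assoc, pullback.lift_snd, pullback.lift_snd_assoc, s.w]

/-- The comparison square of the cube `Φ`, from `s.left` to the componentwise pullback
of `α` and `β`. -/
noncomputable def SqHom.compSq {s t : Sq C} (Φ : SqHom s t) : Sq C where
  A₁ := s.A₁
  A₀ := s.A₀
  B₁ := Φ.P₁
  B₀ := Φ.P₀
  left := s.left
  right := Φ.fP
  top := Φ.c₁
  bot := Φ.c₀
  w := Φ.comp_w

/-- A `3`-cubical extension: the two opposite faces `γ = s` and `α = t`, the two connecting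
faces `σ` and `β`, and the comparison square to the componentwise pullback of `α` and `β`
are all double extensions. -/
def SqHom.Is3CubExt {s t : Sq C} (Φ : SqHom s t) : Prop :=
  s.IsDE ∧ t.IsDE ∧ Φ.sigmaSq.IsDE ∧ Φ.betaSq.IsDE ∧ Φ.compSq.IsDE

end Cube

/-- The cube `Φ : s ⟶ t` is a limit cube: the cone from the initial vertex `s.A₁` on the
diagram formed by the remaining seven vertices is a limit cone. -/
def SqHom.IsLimitCube {s t : Sq C} (Φ : SqHom s t) : Prop :=
  ∀ (W : C) (wA₀ : W ⟶ s.A₀) (wB₁ : W ⟶ s.B₁) (wtA₁ : W ⟶ t.A₁),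
    wA₀ ≫ s.bot = wB₁ ≫ s.right →
    wA₀ ≫ Φ.h₁₀ = wtA₁ ≫ t.left →
    wB₁ ≫ Φ.h₀₁ = wtA₁ ≫ t.top →
    ∃! u : W ⟶ s.A₁, u ≫ s.left = wA₀ ∧ u ≫ s.top = wB₁ ∧ u ≫ Φ.h₁₁ = wtA₁

/-- A discrete fibration (of order 3): a `3`-cubical extension which is a limit cube. -/
def SqHom.IsDiscFib [HasFiniteLimits C] {s t : Sq C} (Φ : SqHom s t) : Prop :=
  Φ.Is3CubExt ∧ Φ.IsLimitCube
section Galois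
variable [HasFiniteLimits C]

/-- A strongly E-Birkhoff Galois structure on `C`: a full replete reflective subcategory
(given by the predicate `inB`, the reflector `F` and the unit `η`) such that every unit
component is a regular epimorphism and every naturality square of the unit at a regular
epimorphism is a double extension. -/
structure BirkhoffStructure (C : Type u) [Category.{v} C] [HasFiniteLimits C] where
  inB : C → Prop
  replete : ∀ {X Y : C}, inB X → (X ≅ Y) → inB Y
  F : C ⥤ C
  η : 𝟭 C ⟶ F
  obj_inB : ∀ A : C, inB (F.obj A)
  unit_regEpi : ∀ A : C, IsRegEpi (η.app A)
  univ : ∀ {A X : C}, inB X → ∀ g : A ⟶ X, ∃! h : F.obj A ⟶ X, η.app A ≫ h = g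
  stronglyBirkhoff : ∀ {A B : C} (f : A ⟶ B), IsRegEpi f →
    IsDoubleExt f (F.map f) (η.app A) (η.app B)

/-- A trivial covering: a regular epimorphism whose unit naturality square is a pullback. -/
def TrivialCovering (G : BirkhoffStructure C) {T E : C} (t : T ⟶ E) : Prop :=
  IsRegEpi t ∧ IsPullback (G.η.app T) t (G.F.map t) (G.η.app E)

/-- A covering: a regular epimorphism whose pullback along some regular epimorphism is a
trivial covering. -/
def Covering (G : BirkhoffStructure C) {A B : C} (c : A ⟶ B) : Prop :=
  IsRegEpi c ∧ ∃ (E : C) (e : E ⟶ B), IsRegEpi e ∧ TrivialCovering G (pullback.snd c e)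

end Galois

/-- The underlying square in `C` of a morphism of `Ext C`. -/
def sqOfHom {f g : ExtCat C} (φ : f ⟶ g) : Sq C where
  A₁ := f.obj.left
  A₀ := f.obj.right
  B₁ := g.obj.left
  B₀ := g.obj.right
  left := f.obj.hom
  right := g.obj.hom
  top := ExtCat.homLeft φ
  bot := ExtCat.homRight φ
  w := ExtCat.hom_w φ

/-- The underlying cube in `C` of a naturality square in `Ext C` of a natural
transformation `η₁ : 𝟭 (Ext C) ⟶ F₁` at a morphism `φ : f ⟶ g` of `Ext C`. -/
def natCube (F₁ : ExtCat C ⥤ ExtCat C) (η₁ : 𝟭 (ExtCat C) ⟶ F₁) {f g : ExtCat C}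
    (φ : f ⟶ g) : SqHom (sqOfHom φ) (sqOfHom (F₁.map φ)) where
  h₁₁ := ExtCat.homLeft (η₁.app f)
  h₁₀ := ExtCat.homRight (η₁.app f)
  h₀₁ := ExtCat.homLeft (η₁.app g)
  h₀₀ := ExtCat.homRight (η₁.app g)
  wA := ExtCat.hom_w (η₁.app f)
  wB := ExtCat.hom_w (η₁.app g)
  wt := by
    have h := congrArg ExtCat.homLeft (η₁.naturality φ)
    rw [ExtCat.homLeft_comp, ExtCat.homLeft_comp] at h
    exact h.symm
  wb := by
    have h := congrArg ExtCat.homRight (η₁.naturality φ)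
    rw [ExtCat.homRight_comp, ExtCat.homRight_comp] at h
    exact h.symm

section LevelOne
variable [HasFiniteLimits C]

/-- The level-one Galois structure induced by a strongly E-Birkhoff Galois structure `G`:
the coverings form a reflective subcategory of `Ext C`, with reflector `F₁` and unit `η₁`,
every unit component is a double extension, and the reflection is strongly E₂-Birkhoff. -/
structure LevelOne (G : BirkhoffStructure C) where
  F₁ : ExtCat C ⥤ ExtCat C
  η₁ : 𝟭 (ExtCat C) ⟶ F₁
  obj_cov : ∀ f : ExtCat C, Covering G (F₁.obj f).obj.hom
  univ : ∀ {f x : ExtCat C}, Covering G x.obj.hom → ∀ g : f ⟶ x,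
    ∃! h : F₁.obj f ⟶ x, η₁.app f ≫ h = g
  unit_DE : ∀ f : ExtCat C, (sqOfHom (η₁.app f)).IsDE
  stronglyBirkhoff : ∀ {f g : ExtCat C} (φ : f ⟶ g), (sqOfHom φ).IsDE →
    (natCube F₁ η₁ φ).Is3CubExt

/-- A trivial double covering: a morphism of `Ext C` whose underlying square is a double
extension and whose `η₁`-naturality square is a pullback in `Ext C`. -/
def TrivDoubleCov {G : BirkhoffStructure C} (L : LevelOne G) {f g : ExtCat C}
    (φ : f ⟶ g) : Prop :=
  (sqOfHom φ).IsDE ∧ IsPullback (L.η₁.app f) φ (L.F₁.map φ) (L.η₁.app g)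

/-- A double covering: a double extension `α : d ⟶ c` in `Ext C` such that the pullback of
`α` along some double extension `γ : e ⟶ c` is a trivial double covering. -/
def DoubleCov {G : BirkhoffStructure C} (L : LevelOne G) {d c : ExtCat C}
    (α : d ⟶ c) : Prop :=
  (sqOfHom α).IsDE ∧ ∃ (e : ExtCat C) (γ : e ⟶ c), (sqOfHom γ).IsDE ∧
    ∃ (p : ExtCat C) (pγ : p ⟶ e) (pα : p ⟶ d),
      IsPullback pγ pα γ α ∧ TrivDoubleCov L pγ

end LevelOne

/-!
The comparison morphism of a double extension is a regular epimorphism, so the square is a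
pullback as soon as its comparison is mono. For `α` this follows directly from the pullback
property of the composite. For `β`, two maps equalised by the comparison become equal after
pulling back along the regular epimorphism `αb`: there they factor through the pullback `α`, and
the composite square identifies the factorisations.
-/

section PullbackCriteria

variable {A₁ A₀ B₁ B₀ X₁ X₀ : C} {fA : A₁ ⟶ A₀} {fB : B₁ ⟶ B₀} {fC : X₁ ⟶ X₀}
  {αt : A₁ ⟶ B₁} {αb : A₀ ⟶ B₀} {βt : B₁ ⟶ X₁} {βb : B₀ ⟶ X₀}

lemma mono_pullback_lift_of_isPullback_comp [HasPullback αb fB] (w : fA ≫ αb = αt ≫ fB)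
    (h : IsPullback (αt ≫ βt) fA fC (αb ≫ βb)) : Mono (pullback.lift fA αt w) where
  right_cancellation u v huv := by
    have hA : u ≫ fA = v ≫ fA := by
      simpa [pullback.lift_fst] using congrArg (· ≫ pullback.fst αb fB) huv
    have ht : u ≫ αt = v ≫ αt := by
      simpa [pullback.lift_snd] using congrArg (· ≫ pullback.snd αb fB) huv
    exact h.hom_ext (by simp only [← Category.assoc, ht]) hA

lemma mono_pullback_lift_of_isPullback_of_isPullback_comp [HasFiniteLimits C] [RegularCat C]
    (w : fB ≫ βb = βt ≫ fC) (hα : IsPullback αt fA fB αb)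
    (h : IsPullback (αt ≫ βt) fA fC (αb ≫ βb)) (hαb : IsRegEpi αb) :
    Mono (pullback.lift fB βt w) where
  right_cancellation {W} u v huv := by
    have hB : u ≫ fB = v ≫ fB := by
      simpa [pullback.lift_fst] using congrArg (· ≫ pullback.fst βb fC) huv
    have ht : u ≫ βt = v ≫ βt := by
      simpa [pullback.lift_snd] using congrArg (· ≫ pullback.snd βb fC) huv
    let q := pullback.snd αb (u ≫ fB)
    obtain ⟨hq⟩ := RegularCat.regEpiPullbackStable αb (u ≫ fB) hαb
    have : Epi q := hq.epi
    have hu : (q ≫ u) ≫ fB = pullback.fst αb (u ≫ fB) ≫ αb := by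
      rw [Category.assoc, ← pullback.condition]
    have hv : (q ≫ v) ≫ fB = pullback.fst αb (u ≫ fB) ≫ αb := by
      rwa [Category.assoc, ← hB, ← Category.assoc]
    have hlift : hα.lift _ _ hu = hα.lift _ _ hv :=
      h.hom_ext (by rw [← Category.assoc, ← Category.assoc, hα.lift_fst, hα.lift_fst,
        Category.assoc, Category.assoc, ht]) (by rw [hα.lift_snd, hα.lift_snd])
    rw [← cancel_epi q, ← hα.lift_fst _ _ hu, ← hα.lift_fst _ _ hv, hlift]

lemma IsDoubleExt.isPullback_of_mono [HasFiniteLimits C] (hα : IsDoubleExt fA fB αt αb)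
    [Mono (pullback.lift fA αt hα.w.symm)] : IsPullback αt fA fB αb := by
  obtain ⟨hc⟩ := hα.comparison
  have := isIso_of_regularEpi_of_mono _ hc
  exact (IsPullback.of_iso_pullback ⟨hα.w.symm⟩ (asIso (pullback.lift fA αt hα.w.symm))
    (pullback.lift_fst _ _ _) (pullback.lift_snd _ _ _)).flip

end PullbackCriteria

/-- In a regular category, if a composite of two double extensions is a
pullback square, then both are pullback squares. -/
theorem statement_5 {C : Type u} [Category.{v} C] [HasFiniteLimits C] [RegularCat C]
    {A₁ A₀ B₁ B₀ X₁ X₀ : C}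
    (fA : A₁ ⟶ A₀) (fB : B₁ ⟶ B₀) (fC : X₁ ⟶ X₀)
    (αt : A₁ ⟶ B₁) (αb : A₀ ⟶ B₀) (βt : B₁ ⟶ X₁) (βb : B₀ ⟶ X₀)
    (hα : IsDoubleExt fA fB αt αb) (hβ : IsDoubleExt fB fC βt βb)
    (h : IsPullback (αt ≫ βt) fA fC (αb ≫ βb)) :
    IsPullback αt fA fB αb ∧ IsPullback βt fB fC βb := by
  have := mono_pullback_lift_of_isPullback_comp hα.w.symm h
  have hαPb := hα.isPullback_of_mono
  have := mono_pullback_lift_of_isPullback_of_isPullback_comp hβ.w.symm hαPb h hα.bot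
  exact ⟨hαPb, hβ.isPullback_of_mono⟩

end Paper
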